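/- Let Δt > 0 and ξ, Π, A, B, Π′ ∈ ℝ³ satisfy one step of the rigid-body midpoint integrator: d⁺(Δt,ξ,A) = Π, d⁺(Δt,ξ,B) = d⁻(Δt,ξ,A), and Π′ = d⁻(Δt,ξ,B). Then ‖Π′‖ = ‖Π‖; that is, each step of the scheme preserves the coadjoint orbit (the sphere of radius ‖Π‖) in 𝔰𝔬(3)* ≅ ℝ³, and hence preserves the Casimir ‖Π‖². -/

import Mathlib

/-! `d⁺(h,ξ,Π)` and `d⁻(h,ξ,Π)` are `w ± (h/2) ξ×Π` with `w = Π − (h²/4)(ξ·Π)ξ` a combination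
of `Π` and `ξ`, hence orthogonal to `ξ×Π`; so they have the same length. Each step of the scheme
passes from `‖d⁺‖` to `‖d⁻‖` twice. -/

open Matrix

noncomputable section

/-- The Euclidean norm on `ℝ³ = Fin 3 → ℝ`. -/
def e3norm (v : Fin 3 → ℝ) : ℝ := Real.sqrt (v ⬝ᵥ v)

/-- `d⁺(h,ξ,Π) = Π + (h/2) ξ×Π − (h²/4)(ξ·Π)ξ`. -/
def dplus (h : ℝ) (ξ Pv : Fin 3 → ℝ) : Fin 3 → ℝ :=
  Pv + (h / 2) • (ξ ⨯₃ Pv) - (h ^ 2 / 4 * (ξ ⬝ᵥ Pv)) • ξ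

/-- `d⁻(h,ξ,Π) = Π − (h/2) ξ×Π − (h²/4)(ξ·Π)ξ`. -/
def dminus (h : ℝ) (ξ Pv : Fin 3 → ℝ) : Fin 3 → ℝ :=
  Pv - (h / 2) • (ξ ⨯₃ Pv) - (h ^ 2 / 4 * (ξ ⬝ᵥ Pv)) • ξ

theorem dotProduct_add_self_eq_sub_self_of_dotProduct_eq_zero {n R : Type*} [Fintype n]
    [CommRing R] {w u : n → R} (h : w ⬝ᵥ u = 0) :
    (w + u) ⬝ᵥ (w + u) = (w - u) ⬝ᵥ (w - u) := by
  have hu : u ⬝ᵥ w = 0 := by rw [dotProduct_comm, h]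
  simp only [add_dotProduct, dotProduct_add, sub_dotProduct, dotProduct_sub, h, hu]
  ring

theorem e3norm_dplus_eq_e3norm_dminus (h : ℝ) (ξ v : Fin 3 → ℝ) :
    e3norm (dplus h ξ v) = e3norm (dminus h ξ v) := by
  set w := v - (h ^ 2 / 4 * (ξ ⬝ᵥ v)) • ξ
  have hw : w ⬝ᵥ (h / 2) • (ξ ⨯₃ v) = 0 := by
    simp only [w, dotProduct_smul, sub_dotProduct, smul_dotProduct, dot_self_cross,
      dot_cross_self, smul_zero, sub_zero]
  have hplus : dplus h ξ v = w + (h / 2) • (ξ ⨯₃ v) := by simp only [dplus, w]; abel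
  have hminus : dminus h ξ v = w - (h / 2) • (ξ ⨯₃ v) := by simp only [dminus, w]; abel
  rw [e3norm, e3norm, hplus, hminus, dotProduct_add_self_eq_sub_self_of_dotProduct_eq_zero hw]

theorem midpoint_step_preserves_coadjoint_orbit_general
    (Δt : ℝ) (ξ Pv A B Pv' : Fin 3 → ℝ)
    (h1 : dplus Δt ξ A = Pv)
    (h2 : dplus Δt ξ B = dminus Δt ξ A)
    (h3 : Pv' = dminus Δt ξ B) :
    e3norm Pv' = e3norm Pv := by
  calc e3norm Pv' = e3norm (dplus Δt ξ B) := by rw [h3, e3norm_dplus_eq_e3norm_dminus]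
    _ = e3norm (dplus Δt ξ A) := by rw [h2, e3norm_dplus_eq_e3norm_dminus]
    _ = e3norm Pv := by rw [h1]

/-- One step of the rigid-body stochastic variational midpoint integrator preserves the
coadjoint orbit (the sphere of radius `‖Π‖`) in `𝔰𝔬(3)* ≅ ℝ³`, hence the Casimir `‖Π‖²`. -/
theorem midpoint_step_preserves_coadjoint_orbit
    (Δt : ℝ) (hΔt : 0 < Δt) (ξ Pv A B Pv' : Fin 3 → ℝ)
    (h1 : dplus Δt ξ A = Pv)
    (h2 : dplus Δt ξ B = dminus Δt ξ A)
    (h3 : Pv' = dminus Δt ξ B) :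
    e3norm Pv' = e3norm Pv :=
  midpoint_step_preserves_coadjoint_orbit_general Δt ξ Pv A B Pv' h1 h2 h3
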